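/- The transformation r3 of the quantum degenerate Garnier system G(5) is a quantum canonical transformation: suppose x1 is a unit of R, and define q1 = x1^{-1}, p1 = −2x2^2x1^{-2} − x1^2y1 − x1x2y2 − (α1 − 2α2)·x1 + 2x1^{-1} − 2t2, q2 = x2x1^{-1}, p2 = 2x2^3x1^{-3} − 4x2x1^{-2} + x1y2 − 2t1. Then (q1, p1, q2, p2) again satisfy the canonical commutation relations: [q1,p1] = [q2,p2] = h and [q1,q2] = [p1,p2] = [q1,p2] = [q2,p1] = 0. -/

import Mathlib

/-!
The transformation factors as the cotangent lift of the change of chart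
`(x₁, x₂) ↦ (1 / x₁, x₂ / x₁)` of `ℙ²`, followed by a shift of the momenta by the gradient of a
function `S` of the new positions. The first is canonical by a Leibniz-rule computation that only
needs `[x₁⁻¹, y₁] = -x₁⁻¹ h x₁⁻¹`. The second is canonical because the positions commute and
`[pⱼ, ·]` acts as `-h ∂/∂qⱼ` on functions of them, so that
`[p₁ + ∂₁S, p₂ + ∂₂S] = h (∂₁∂₂S - ∂₂∂₁S) = 0`.
-/

section

attribute [local instance] LieRing.ofAssociativeRing

variable {R : Type*} [Ring R]

namespace Ring

theorem lie_mul_right (a b c : R) : ⁅a, b * c⁆ = ⁅a, b⁆ * c + b * ⁅a, c⁆ := by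
  simp only [lie_def]; noncomm_ring

theorem lie_mul_left (a b c : R) : ⁅a * b, c⁆ = a * ⁅b, c⁆ + ⁅a, c⁆ * b := by
  simp only [lie_def]; noncomm_ring

theorem lie_ofNat_right (a : R) (n : ℕ) [n.AtLeastTwo] : ⁅a, (ofNat(n) : R)⁆ = 0 :=
  (Commute.ofNat_right a n).lie_eq

theorem lie_ofNat_left (a : R) (n : ℕ) [n.AtLeastTwo] : ⁅(ofNat(n) : R), a⁆ = 0 :=
  (Commute.ofNat_left n a).lie_eq

theorem lie_eq_neg_of_mul_eq_one {x u : R} (hux : u * x = 1) (hxu : x * u = 1) (y : R) :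
    ⁅u, y⁆ = -(u * ⁅x, y⁆ * u) := by
  calc ⁅u, y⁆ = u * y * (x * u) - (u * x) * y * u := by rw [hux, hxu, mul_one, one_mul, lie_def]
    _ = -(u * ⁅x, y⁆ * u) := by rw [lie_def]; noncomm_ring

end Ring

structure IsCanonical (h q₁ p₁ q₂ p₂ : R) : Prop where
  lie_q₁_p₁ : ⁅q₁, p₁⁆ = h
  lie_q₂_p₂ : ⁅q₂, p₂⁆ = h
  lie_q₁_q₂ : ⁅q₁, q₂⁆ = 0
  lie_p₁_p₂ : ⁅p₁, p₂⁆ = 0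
  lie_q₁_p₂ : ⁅q₁, p₂⁆ = 0
  lie_q₂_p₁ : ⁅q₂, p₁⁆ = 0

namespace IsCanonical

variable {h q₁ p₁ q₂ p₂ : R}

theorem add_momenta (hc : IsCanonical h q₁ p₁ q₂ p₂) {f₁ f₂ : R}
    (h₁₁ : Commute q₁ f₁) (h₁₂ : Commute q₁ f₂) (h₂₁ : Commute q₂ f₁) (h₂₂ : Commute q₂ f₂)
    (hf : Commute f₁ f₂) (hclosed : ⁅p₁, f₂⁆ = ⁅p₂, f₁⁆) :
    IsCanonical h q₁ (p₁ + f₁) q₂ (p₂ + f₂) where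
  lie_q₁_p₁ := by rw [lie_add, hc.lie_q₁_p₁, h₁₁.lie_eq, add_zero]
  lie_q₂_p₂ := by rw [lie_add, hc.lie_q₂_p₂, h₂₂.lie_eq, add_zero]
  lie_q₁_q₂ := hc.lie_q₁_q₂
  lie_p₁_p₂ := by
    rw [add_lie, lie_add, lie_add, hc.lie_p₁_p₂, hclosed, hf.lie_eq, ← lie_skew p₂ f₁]
    abel
  lie_q₁_p₂ := by rw [lie_add, hc.lie_q₁_p₂, h₁₂.lie_eq, add_zero]
  lie_q₂_p₁ := by rw [lie_add, hc.lie_q₂_p₁, h₂₁.lie_eq, add_zero]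

theorem chart_change (hc : IsCanonical h q₁ p₁ q₂ p₂) (hh : ∀ r, Commute h r) {u : R}
    (huq : u * q₁ = 1) (hqu : q₁ * u = 1) :
    IsCanonical h u (-(q₁ ^ 2 * p₁) - q₁ * q₂ * p₂) (q₂ * u) (q₁ * p₂) := by
  have lie_u : ∀ y, ⁅u, y⁆ = -(u * ⁅q₁, y⁆ * u) := Ring.lie_eq_neg_of_mul_eq_one huq hqu
  have lie_u_q₁ : ⁅u, q₁⁆ = 0 := by rw [lie_u, lie_self, mul_zero, zero_mul, neg_zero]
  have lie_u_q₂ : ⁅u, q₂⁆ = 0 := by rw [lie_u, hc.lie_q₁_q₂, mul_zero, zero_mul, neg_zero]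
  have lie_u_p₂ : ⁅u, p₂⁆ = 0 := by rw [lie_u, hc.lie_q₁_p₂, mul_zero, zero_mul, neg_zero]
  have lie_u_p₁ : ⁅u, p₁⁆ = -(u * h * u) := by rw [lie_u, hc.lie_q₁_p₁]
  have lie_q₂_q₁ : ⁅q₂, q₁⁆ = 0 := by rw [← lie_skew, hc.lie_q₁_q₂, neg_zero]
  have lie_p₂_q₁ : ⁅p₂, q₁⁆ = 0 := by rw [← lie_skew, hc.lie_q₁_p₂, neg_zero]
  have lie_p₁_q₁ : ⁅p₁, q₁⁆ = -h := by rw [← lie_skew, hc.lie_q₁_p₁]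
  have q₁_h_u : q₁ * (h * u) = h := by rw [← mul_assoc, ← (hh q₁).eq, mul_assoc, hqu, mul_one]
  constructor
  · simp only [lie_sub, lie_neg, Ring.lie_mul_right, pow_two, lie_u_q₁, lie_u_q₂, lie_u_p₂,
      lie_u_p₁, mul_zero, zero_mul, add_zero, zero_add, sub_zero, mul_neg, neg_neg]
    rw [show q₁ * q₁ * (u * h * u) = q₁ * (q₁ * u) * (h * u) by noncomm_ring, hqu, mul_one,
      q₁_h_u]
  · simpa only [Ring.lie_mul_left, Ring.lie_mul_right, lie_u_q₁, lie_u_p₂, lie_q₂_q₁,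
      hc.lie_q₂_p₂, mul_zero, zero_mul, add_zero, zero_add] using q₁_h_u
  · rw [Ring.lie_mul_right, lie_u_q₂, lie_self, zero_mul, mul_zero, add_zero]
  · simp only [sub_lie, neg_lie, Ring.lie_mul_left, Ring.lie_mul_right, pow_two, lie_self,
      lie_p₁_q₁, hc.lie_p₁_p₂, hc.lie_q₁_p₂, lie_p₂_q₁, lie_q₂_q₁, hc.lie_q₂_p₂, mul_zero,
      zero_mul, add_zero, zero_add, mul_neg, neg_neg]
    noncomm_ring
  · rw [Ring.lie_mul_right, lie_u_q₁, lie_u_p₂, zero_mul, mul_zero, add_zero]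
  · simp only [lie_sub, lie_neg, Ring.lie_mul_left, Ring.lie_mul_right, pow_two, lie_u_q₁,
      lie_u_q₂, lie_u_p₂, lie_u_p₁, lie_self, lie_q₂_q₁, hc.lie_q₂_p₁, hc.lie_q₂_p₂, mul_zero,
      zero_mul, add_zero, zero_add, mul_neg, neg_neg]
    rw [sub_eq_zero]
    calc q₁ * q₁ * (q₂ * (u * h * u)) = q₁ * (q₁ * q₂) * u * (h * u) := by noncomm_ring
      _ = q₁ * (q₂ * q₁) * u * (h * u) := by rw [(commute_iff_lie_eq.mpr hc.lie_q₁_q₂).eq]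
      _ = q₁ * q₂ * (q₁ * u) * (h * u) := by noncomm_ring
      _ = q₁ * q₂ * (h * u) := by rw [hqu, mul_one]

/-- The added momenta are the gradient of
`S = -2 q₁ q₂² + q₂⁴ / 2 + q₁² - c log q₁ - 2 t₂ q₁ - 2 t₁ q₂`, where `x = 1 / q₁`. -/
theorem add_gauge_r3 (hc : IsCanonical h q₁ p₁ q₂ p₂) (hh : ∀ r, Commute h r) {x c t₁ t₂ : R}
    (hxq : x * q₁ = 1) (hqx : q₁ * x = 1) (hcc : ∀ r, Commute c r) (ht₁ : ∀ r, Commute t₁ r)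
    (ht₂ : ∀ r, Commute t₂ r) :
    IsCanonical h q₁ (p₁ + (-(2 * q₂ ^ 2) - c * x + 2 * q₁ - 2 * t₂)) q₂
      (p₂ + (2 * q₂ ^ 3 - 4 * q₂ * q₁ - 2 * t₁)) := by
  have lie_x : ∀ y, ⁅x, y⁆ = -(x * ⁅q₁, y⁆ * x) := Ring.lie_eq_neg_of_mul_eq_one hxq hqx
  have lie_q₂_q₁ : ⁅q₂, q₁⁆ = 0 := by rw [← lie_skew, hc.lie_q₁_q₂, neg_zero]
  have lie_x_q₁ : ⁅x, q₁⁆ = 0 := by rw [lie_x, lie_self, mul_zero, zero_mul, neg_zero]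
  have lie_q₁_x : ⁅q₁, x⁆ = 0 := by rw [← lie_skew, lie_x_q₁, neg_zero]
  have lie_x_q₂ : ⁅x, q₂⁆ = 0 := by rw [lie_x, hc.lie_q₁_q₂, mul_zero, zero_mul, neg_zero]
  have lie_q₂_x : ⁅q₂, x⁆ = 0 := by rw [← lie_skew, lie_x_q₂, neg_zero]
  have lie_p₂_x : ⁅p₂, x⁆ = 0 := by
    rw [← lie_skew, lie_x, hc.lie_q₁_p₂, mul_zero, zero_mul, neg_zero, neg_zero]
  have lie_p₁_q₁ : ⁅p₁, q₁⁆ = -h := by rw [← lie_skew, hc.lie_q₁_p₁]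
  have lie_p₁_q₂ : ⁅p₁, q₂⁆ = 0 := by rw [← lie_skew, hc.lie_q₂_p₁, neg_zero]
  have lie_p₂_q₁ : ⁅p₂, q₁⁆ = 0 := by rw [← lie_skew, hc.lie_q₁_p₂, neg_zero]
  have lie_p₂_q₂ : ⁅p₂, q₂⁆ = -h := by rw [← lie_skew, hc.lie_q₂_p₂]
  refine hc.add_momenta ?_ ?_ ?_ ?_ ?_ ?hclosed
  case hclosed =>
    simp only [lie_sub, lie_add, lie_neg, Ring.lie_mul_right, pow_succ, pow_zero, one_mul,
      lie_p₁_q₁, lie_p₁_q₂, lie_p₂_q₁, lie_p₂_q₂, lie_p₂_x, fun r => (hcc r).symm.lie_eq,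
      fun r => (ht₁ r).symm.lie_eq, fun r => (ht₂ r).symm.lie_eq, Ring.lie_ofNat_right,
      mul_zero, zero_mul, add_zero, zero_add, sub_zero, zero_sub, mul_neg, neg_mul, neg_neg]
    rw [(hh q₂).eq]
    noncomm_ring
  all_goals
    rw [commute_iff_lie_eq]
    simp only [lie_sub, sub_lie, lie_add, add_lie, lie_neg, neg_lie, Ring.lie_mul_right,
      Ring.lie_mul_left, pow_succ, pow_zero, one_mul, lie_self, hc.lie_q₁_q₂, lie_q₂_q₁,
      lie_x_q₁, lie_q₁_x, lie_x_q₂, lie_q₂_x, fun r => (hcc r).lie_eq,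
      fun r => (ht₂ r).lie_eq, fun r => (hcc r).symm.lie_eq, fun r => (ht₁ r).symm.lie_eq,
      fun r => (ht₂ r).symm.lie_eq, Ring.lie_ofNat_right, Ring.lie_ofNat_left, mul_zero,
      zero_mul, add_zero, sub_zero, neg_zero]

end IsCanonical

end

/-- The transformation r3 of the quantum degenerate Garnier system G(5) is a
quantum canonical transformation. -/
theorem quantum_garnier_G5_r3_canonical
    {R : Type*} [Ring R]
    (h α1 α2 t1 t2 : R)
    (hh : ∀ r : R, h * r = r * h)
    (hA1 : ∀ r : R, α1 * r = r * α1)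
    (hA2 : ∀ r : R, α2 * r = r * α2)
    (ht1 : ∀ r : R, t1 * r = r * t1)
    (ht2 : ∀ r : R, t2 * r = r * t2)
    (x1 y1 x2 y2 : R)
    (hx1y1 : x1 * y1 - y1 * x1 = h)
    (hx2y2 : x2 * y2 - y2 * x2 = h)
    (hx1x2 : x1 * x2 - x2 * x1 = 0)
    (hy1y2 : y1 * y2 - y2 * y1 = 0)
    (hx1y2 : x1 * y2 - y2 * x1 = 0)
    (hx2y1 : x2 * y1 - y1 * x2 = 0)
    (x1i : R) (hx1il : x1i * x1 = 1) (hx1ir : x1 * x1i = 1)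
    (q1 p1 q2 p2 : R)
    (hq1 : q1 = x1i)
    (hp1 : p1 = -(2 * x2^2 * x1i^2) - x1^2 * y1 - x1 * x2 * y2
      - (α1 - 2 * α2) * x1 + 2 * x1i - 2 * t2)
    (hq2 : q2 = x2 * x1i)
    (hp2 : p2 = 2 * x2^3 * x1i^3 - 4 * x2 * x1i^2 + x1 * y2 - 2 * t1) :
    q1 * p1 - p1 * q1 = h ∧ q2 * p2 - p2 * q2 = h ∧
    q1 * q2 - q2 * q1 = 0 ∧ p1 * p2 - p2 * p1 = 0 ∧
    q1 * p2 - p2 * q1 = 0 ∧ q2 * p1 - p1 * q2 = 0 := by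
  have hc : IsCanonical h x1 y1 x2 y2 := ⟨hx1y1, hx2y2, hx1x2, hy1y2, hx1y2, hx2y1⟩
  have hα : ∀ r, Commute (α1 - 2 * α2) r :=
    fun r => Commute.sub_left (hA1 r) ((Commute.ofNat_left 2 r).mul_left (hA2 r))
  obtain ⟨e₁, e₂, e₃, e₄, e₅, e₆⟩ :=
    (hc.chart_change hh hx1il hx1ir).add_gauge_r3 hh hx1ir hx1il hα ht1 ht2
  have hx2x1i : Commute x2 x1i :=
    (Commute.units_inv_left (u := ⟨x1, x1i, hx1ir, hx1il⟩) (sub_eq_zero.mp hx1x2)).symm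
  have hp1' : p1 = -(x1 ^ 2 * y1) - x1 * x2 * y2
      + (-(2 * (x2 * x1i) ^ 2) - (α1 - 2 * α2) * x1 + 2 * x1i - 2 * t2) := by
    rw [hp1, hx2x1i.mul_pow]; noncomm_ring
  have hp2' : p2 = x1 * y2 + (2 * (x2 * x1i) ^ 3 - 4 * (x2 * x1i) * x1i - 2 * t1) := by
    rw [hp2, hx2x1i.mul_pow]; noncomm_ring
  subst hq1 hq2 hp1' hp2'
  exact ⟨e₁, e₂, e₃, e₄, e₅, e₆⟩
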